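/- Let the setting be type A_N or type B_N. For each (i,k) ∈ X there exists exactly one path in P_{i,k} whose set of lower corners C_{p,−} is empty (the highest path p⁺_{i,k}); moreover it is the unique path in P_{i,k} containing the point (i,k) in type A, the unique path containing ι(i,k) in type B when i < N, and the unique path containing (2N−1, k−ε) in type B when i = N. -/

import Mathlib

namespace Paper

/-- The ambient setting: type `A N` (with `N ≥ 1`) or type `B N ε`
(with `N ≥ 2` and `0 < ε < 1/2`). -/
inductive Setting where
  | A (N : ℕ)
  | B (N : ℕ) (ε : ℝ)

namespace Setting

/-- The rank `N`. -/
def N : Setting → ℕ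
  | A n => n
  | B n _ => n

/-- Validity of the parameters of the setting. -/
def valid : Setting → Prop
  | A n => 1 ≤ n
  | B n ε => 2 ≤ n ∧ 0 < ε ∧ ε < 1 / 2

end Setting

/-- The numbers `r_i` : in type A all equal `1`; in type B, `r_N = 1` and `r_i = 2` for `i < N`. -/
def rr : Setting → ℕ → ℕ
  | .A _, _ => 1
  | .B n _, j => if j = n then 1 else 2

/-- The set `X` in type `A_N`. -/
def XA (n : ℕ) : Set (ℕ × ℤ) :=
  {ik | 1 ≤ ik.1 ∧ ik.1 ≤ n ∧ ((ik.1 : ℤ) - ik.2) % 2 = 1}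

/-- The set `X` in type `B_N`. -/
def XB (n : ℕ) : Set (ℕ × ℤ) :=
  {ik | (ik.1 = n ∧ ik.2 % 2 = 1) ∨ (1 ≤ ik.1 ∧ ik.1 < n ∧ ik.2 % 2 = 0)}

/-- The set `X ⊆ I × ℤ`. -/
def X : Setting → Set (ℕ × ℤ)
  | .A n => XA n
  | .B n _ => XB n

/-- The set `W = {(i,k) : (i, k - r_i) ∈ X}`. -/
def W (S : Setting) : Set (ℕ × ℤ) :=
  {ik | (ik.1, ik.2 - (rr S ik.1 : ℤ)) ∈ X S}

/-- The `r`-th point of a path (a finite list of points of the plane). -/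
def pt (p : List (ℝ × ℝ)) (r : ℕ) : ℝ × ℝ := p.getD r (0, 0)

/-- The set of paths `𝒫_{i,k}` in type `A_N`. -/
def pathsA (n : ℕ) (i : ℕ) (k : ℤ) : Set (List (ℝ × ℝ)) :=
  {p | p.length = n + 2 ∧
    (∀ r, r < n + 2 → (pt p r).1 = (r : ℝ)) ∧
    (pt p 0).2 = (i : ℝ) + (k : ℝ) ∧
    (pt p (n + 1)).2 = (n : ℝ) + 1 - (i : ℝ) + (k : ℝ) ∧
    (∀ r, r ≤ n → (pt p (r + 1)).2 - (pt p r).2 = 1 ∨ (pt p (r + 1)).2 - (pt p r).2 = -1)}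

/-- The set of paths `𝒫_{N,ℓ}` in type `B_N`. -/
def pathsBspin (n : ℕ) (ε : ℝ) (l : ℤ) : Set (List (ℝ × ℝ)) :=
  {p | p.length = n + 1 ∧
    (if l % 4 = 3 then ∀ r, r < n → (pt p r).1 = 2 * (r : ℝ)
     else ∀ r, r < n → (pt p r).1 = 4 * (n : ℝ) - 2 - 2 * (r : ℝ)) ∧
    (pt p n).1 = 2 * (n : ℝ) - 1 ∧
    (pt p 0).2 = (l : ℝ) + 2 * (n : ℝ) - 1 ∧
    (∀ r, r + 2 ≤ n → (pt p (r + 1)).2 - (pt p r).2 = 2 ∨ (pt p (r + 1)).2 - (pt p r).2 = -2) ∧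
    ((pt p n).2 - (pt p (n - 1)).2 = 1 + ε ∨ (pt p n).2 - (pt p (n - 1)).2 = -(1 + ε))}

/-- The set of paths `𝒫_{i,k}` in type `B_N`. -/
def pathsB (n : ℕ) (ε : ℝ) (i : ℕ) (k : ℤ) : Set (List (ℝ × ℝ)) :=
  if i = n then pathsBspin n ε k
  else {p | ∃ a b : List (ℝ × ℝ),
    a ∈ pathsBspin n ε (k - (2 * (n : ℤ) - 2 * (i : ℤ) - 1)) ∧
    b ∈ pathsBspin n ε (k + (2 * (n : ℤ) - 2 * (i : ℤ) - 1)) ∧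
    p = a ++ b.reverse ∧
    (pt a n).1 = (pt b n).1 ∧ 0 < (pt a n).2 - (pt b n).2}

/-- The set of paths `𝒫_{i,k}`. -/
def P : Setting → ℕ → ℤ → Set (List (ℝ × ℝ))
  | .A n => pathsA n
  | .B n ε => pathsB n ε

/-- The map `ι : X → ℤ × ℤ` of type `B_N`. -/
def iotaB (n : ℕ) (ik : ℕ × ℤ) : ℤ × ℤ :=
  if ik.1 = n then (2 * (n : ℤ) - 1, ik.2)
  else if (2 * (n : ℤ) + ik.2 - 2 * (ik.1 : ℤ)) % 4 = 2 then (2 * (ik.1 : ℤ), ik.2)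
  else (4 * (n : ℤ) - 2 - 2 * (ik.1 : ℤ), ik.2)

/-- The corners of a path: `Cp S p true` is the set `C_{p,+}` of upper corners, and
`Cp S p false` is the set `C_{p,-}` of lower corners. -/
def Cp (S : Setting) (p : List (ℝ × ℝ)) (up : Bool) : Set (ℕ × ℤ) :=
  match S with
  | .A n =>
    {jl | 1 ≤ jl.1 ∧ jl.1 ≤ n ∧
      pt p jl.1 = ((jl.1 : ℝ), (jl.2 : ℝ)) ∧
      (pt p (jl.1 - 1)).2 = (jl.2 : ℝ) + (if up then 1 else -1) ∧
      (pt p (jl.1 + 1)).2 = (jl.2 : ℝ) + (if up then 1 else -1)}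
  | .B n ε =>
    {jl | jl ∈ XB n ∧
      ((∃ r : ℕ, 1 ≤ r ∧ r + 1 < p.length ∧
          pt p r = (((iotaB n jl).1 : ℝ), ((iotaB n jl).2 : ℝ)) ∧
          (iotaB n jl).1 ≠ 0 ∧ (iotaB n jl).1 ≠ 2 * (n : ℤ) - 1 ∧
          (iotaB n jl).1 ≠ 4 * (n : ℤ) - 2 ∧
          (if up then (pt p r).2 < (pt p (r - 1)).2 ∧ (pt p r).2 < (pt p (r + 1)).2
           else (pt p (r - 1)).2 < (pt p r).2 ∧ (pt p (r + 1)).2 < (pt p r).2))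
       ∨ (jl.1 = n ∧
          (if up then (2 * (n : ℝ) - 1, (jl.2 : ℝ) - ε) ∈ p ∧ (2 * (n : ℝ) - 1, (jl.2 : ℝ) + ε) ∉ p
           else (2 * (n : ℝ) - 1, (jl.2 : ℝ) + ε) ∈ p ∧ (2 * (n : ℝ) - 1, (jl.2 : ℝ) - ε) ∉ p)))}

/-- `p'` is obtained from `p` by replacing the point `q` by the point `q'`. -/
def Replace1 (p p' : List (ℝ × ℝ)) (q q' : ℝ × ℝ) : Prop :=
  ∃ r : ℕ, r < p.length ∧ pt p r = q ∧ p'.length = p.length ∧ pt p' r = q' ∧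
    ∀ s, s < p.length → s ≠ r → pt p' s = pt p s

/-- `p'` is obtained from `p` by replacing the point `q1` by `q1'` and the point `q2` by `q2'`. -/
def Replace2 (p p' : List (ℝ × ℝ)) (q1 q1' q2 q2' : ℝ × ℝ) : Prop :=
  ∃ r s : ℕ, r < p.length ∧ s < p.length ∧ r ≠ s ∧ pt p r = q1 ∧ pt p s = q2 ∧
    p'.length = p.length ∧ pt p' r = q1' ∧ pt p' s = q2' ∧
    ∀ u, u < p.length → u ≠ r → u ≠ s → pt p' u = pt p u

/-- The path `p` can be lowered at `(j, l)`: `(j, l - r_j) ∈ C_{p,+}` and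
`(j, l + r_j) ∉ C_{p,+}`. -/
def CanLower (S : Setting) (p : List (ℝ × ℝ)) (j : ℕ) (l : ℤ) : Prop :=
  (j, l - (rr S j : ℤ)) ∈ Cp S p true ∧ (j, l + (rr S j : ℤ)) ∉ Cp S p true

/-- `p'` is the result of the lowering move at `(j,l)` applied to the path `p ∈ 𝒫_{i,k}`;
written `p' = p 𝒜_{j,l}⁻¹`. -/
def LoweredTo (S : Setting) (i : ℕ) (k : ℤ) (j : ℕ) (l : ℤ)
    (p p' : List (ℝ × ℝ)) : Prop :=
  p ∈ P S i k ∧ p' ∈ P S i k ∧ CanLower S p j l ∧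
  (match S with
   | .A _ => Replace1 p p' ((j : ℝ), (l : ℝ) - 1) ((j : ℝ), (l : ℝ) + 1)
   | .B n ε =>
     if j = n then
       Replace1 p p' (2 * (n : ℝ) - 1, (l : ℝ) - 1 - ε) (2 * (n : ℝ) - 1, (l : ℝ) + 1 + ε)
     else if j = n - 1 then
       Replace2 p p'
         (((iotaB n (j, l - 2)).1 : ℝ), (l : ℝ) - 2) (((iotaB n (j, l - 2)).1 : ℝ), (l : ℝ) + 2)
         (2 * (n : ℝ) - 1, (l : ℝ) - 1 + ε) (2 * (n : ℝ) - 1, (l : ℝ) + 1 - ε)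
     else
       Replace1 p p'
         (((iotaB n (j, l - 2)).1 : ℝ), (l : ℝ) - 2) (((iotaB n (j, l - 2)).1 : ℝ), (l : ℝ) + 2))

/-- The path `p` can be raised at `(j,l)`: it is of the form `p' 𝒜_{j,l}⁻¹`. -/
def CanRaise (S : Setting) (i : ℕ) (k : ℤ) (p : List (ℝ × ℝ)) (j : ℕ) (l : ℤ) : Prop :=
  ∃ p', LoweredTo S i k j l p' p

/-- The monomial group `ℳ`, realised as exponent functions: the free abelian group on the
symbols `Y_{i,k}`, `(i,k) ∈ X`, is identified with finitely supported functions `(ℕ × ℤ) → ℤ`,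
written additively. -/
def Y (x : ℕ × ℤ) : (ℕ × ℤ) → ℤ := fun z => if z = x then 1 else 0

noncomputable def ind (s : Prop) : ℤ := @ite ℤ s (Classical.propDecidable s) 1 0

/-- The monomial `m(p)` of a path: `∏ Y_{j,l}` over upper corners times `∏ Y_{j,l}⁻¹`
over lower corners. -/
noncomputable def mon (S : Setting) (p : List (ℝ × ℝ)) : (ℕ × ℤ) → ℤ :=
  fun x => ind (x ∈ Cp S p true) - ind (x ∈ Cp S p false)

/-- The monomials `A_{j,l}`, with the conventions `Y_{0,·} = Y_{N+1,·} = 1`. -/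
def Amon (S : Setting) (j : ℕ) (l : ℤ) : (ℕ × ℤ) → ℤ :=
  match S with
  | .A n =>
      Y (j, l + 1) + Y (j, l - 1) - (if j = 1 then 0 else Y (j - 1, l))
        - (if j = n then 0 else Y (j + 1, l))
  | .B n _ =>
      if j = n then Y (n, l + 1) + Y (n, l - 1) - Y (n - 1, l)
      else if j = n - 1 then
        Y (n - 1, l + 2) + Y (n - 1, l - 2) - (if j = 1 then 0 else Y (n - 2, l))
          - Y (n, l + 1) - Y (n, l - 1)
      else
        Y (j, l + 2) + Y (j, l - 2) - (if j = 1 then 0 else Y (j - 1, l)) - Y (j + 1, l)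

/-- A monomial is dominant iff all its exponents are nonnegative. -/
def Dominant (m : (ℕ × ℤ) → ℤ) : Prop := ∀ x, 0 ≤ m x

/-- A monomial is anti-dominant iff all its exponents are nonpositive. -/
def AntiDominant (m : (ℕ × ℤ) → ℤ) : Prop := ∀ x, m x ≤ 0

/-- `(i',k')` is in snake position with respect to `(i,k)`. -/
def SnakePos : Setting → ℕ × ℤ → ℕ × ℤ → Prop
  | .A _, ik, ik' => |(ik'.1 : ℤ) - (ik.1 : ℤ)| + 2 ≤ ik'.2 - ik.2
  | .B n _, ik, ik' =>
      if ik.1 = n ∧ ik'.1 = n then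
        2 ≤ ik'.2 - ik.2 ∧ (ik'.2 - ik.2) % 4 = 2
      else if ik.1 = n ∨ ik'.1 = n then
        2 * |(ik'.1 : ℤ) - (ik.1 : ℤ)| + 3 ≤ ik'.2 - ik.2 ∧
          (ik'.2 - ik.2) % 4 = (2 * |(ik'.1 : ℤ) - (ik.1 : ℤ)| - 1) % 4
      else
        2 * |(ik'.1 : ℤ) - (ik.1 : ℤ)| + 4 ≤ ik'.2 - ik.2 ∧
          (ik'.2 - ik.2) % 4 = (2 * |(ik'.1 : ℤ) - (ik.1 : ℤ)|) % 4

/-- A snake: a sequence of points of `X`, each in snake position w.r.t. the previous one. -/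
def IsSnake (S : Setting) {T : ℕ} (w : Fin T → ℕ × ℤ) : Prop :=
  (∀ t, w t ∈ X S) ∧
  ∀ (t : Fin T) (h : (t : ℕ) + 1 < T), SnakePos S (w t) (w ⟨(t : ℕ) + 1, h⟩)

/-- `p` is strictly above `p'`. -/
def StrictlyAbove (p p' : List (ℝ × ℝ)) : Prop :=
  ∀ a ∈ p, ∀ b ∈ p', a.1 = b.1 → a.2 < b.2

/-- A tuple of paths is non-overlapping. -/
def NonOverlapping {T : ℕ} (ps : Fin T → List (ℝ × ℝ)) : Prop :=
  ∀ s t : Fin T, s < t → StrictlyAbove (ps s) (ps t)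

/-- The set `𝒫̄` of non-overlapping tuples of paths attached to a snake. -/
def PBar (S : Setting) {T : ℕ} (w : Fin T → ℕ × ℤ) : Set (Fin T → List (ℝ × ℝ)) :=
  {ps | (∀ t, ps t ∈ P S (w t).1 (w t).2) ∧ NonOverlapping ps}

/-- The product `∏_t m(p_t)` of the monomials of a tuple of paths. -/
noncomputable def tmon (S : Setting) {T : ℕ} (ps : Fin T → List (ℝ × ℝ)) : (ℕ × ℤ) → ℤ :=
  ∑ t, mon S (ps t)

/-- Lowering move at `jl` on a tuple of paths: one component is lowered, the others
are unchanged. -/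
def TLoweredTo (S : Setting) {T : ℕ} (w : Fin T → ℕ × ℤ) (jl : ℕ × ℤ)
    (ps ps' : Fin T → List (ℝ × ℝ)) : Prop :=
  ∃ t, LoweredTo S (w t).1 (w t).2 jl.1 jl.2 (ps t) (ps' t) ∧ ∀ s, s ≠ t → ps' s = ps s

/-- Sequences of raising/lowering moves on a single path; the list records, for each move,
whether it was a lowering move (`true`) or a raising move (`false`), and its site. -/
inductive MoveSeq (S : Setting) (i : ℕ) (k : ℤ) :
    List (ℝ × ℝ) → List (ℝ × ℝ) → List (Bool × (ℕ × ℤ)) → Prop where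
  | nil (p : List (ℝ × ℝ)) : MoveSeq S i k p p []
  | lower {p q r : List (ℝ × ℝ)} {jl : ℕ × ℤ} {ms : List (Bool × (ℕ × ℤ))} :
      jl ∈ W S → LoweredTo S i k jl.1 jl.2 p q → MoveSeq S i k q r ms →
      MoveSeq S i k p r ((true, jl) :: ms)
  | raise {p q r : List (ℝ × ℝ)} {jl : ℕ × ℤ} {ms : List (Bool × (ℕ × ℤ))} :
      jl ∈ W S → LoweredTo S i k jl.1 jl.2 q p → MoveSeq S i k q r ms →
      MoveSeq S i k p r ((false, jl) :: ms)

/-- Sequences of raising/lowering moves on tuples of paths, all of whose intermediate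
tuples are non-overlapping. -/
inductive TMoveSeq (S : Setting) {T : ℕ} (w : Fin T → ℕ × ℤ) :
    (Fin T → List (ℝ × ℝ)) → (Fin T → List (ℝ × ℝ)) → List (Bool × (ℕ × ℤ)) → Prop where
  | nil (ps : Fin T → List (ℝ × ℝ)) : TMoveSeq S w ps ps []
  | lower {ps qs rs : Fin T → List (ℝ × ℝ)} {jl : ℕ × ℤ} {ms : List (Bool × (ℕ × ℤ))} :
      jl ∈ W S → TLoweredTo S w jl ps qs → NonOverlapping qs →
      TMoveSeq S w qs rs ms → TMoveSeq S w ps rs ((true, jl) :: ms)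
  | raise {ps qs rs : Fin T → List (ℝ × ℝ)} {jl : ℕ × ℤ} {ms : List (Bool × (ℕ × ℤ))} :
      jl ∈ W S → TLoweredTo S w jl qs ps → NonOverlapping qs →
      TMoveSeq S w qs rs ms → TMoveSeq S w ps rs ((false, jl) :: ms)

/-- Sequences of lowering moves on tuples of paths, all of whose intermediate tuples
are non-overlapping; the list records the sites, in order. -/
inductive TLowerSeq (S : Setting) {T : ℕ} (w : Fin T → ℕ × ℤ) :
    (Fin T → List (ℝ × ℝ)) → (Fin T → List (ℝ × ℝ)) → List (ℕ × ℤ) → Prop where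
  | nil (ps : Fin T → List (ℝ × ℝ)) : TLowerSeq S w ps ps []
  | cons {ps qs rs : Fin T → List (ℝ × ℝ)} {jl : ℕ × ℤ} {ms : List (ℕ × ℤ)} :
      jl ∈ W S → TLoweredTo S w jl ps qs → NonOverlapping qs →
      TLowerSeq S w qs rs ms → TLowerSeq S w ps rs (jl :: ms)

/-- Weak order on paths with the same x-coordinates: `p` is weakly above `p'`. -/
def WeaklyAbove (p p' : List (ℝ × ℝ)) : Prop :=
  p.length = p'.length ∧ ∀ r, r < p.length → (pt p r).2 ≤ (pt p' r).2

/-- `p` is weakly below `p'`. -/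
def WeaklyBelow (p p' : List (ℝ × ℝ)) : Prop :=
  p.length = p'.length ∧ ∀ r, r < p.length → (pt p' r).2 ≤ (pt p r).2

/-- The path `top(p, p')`. -/
def topPath (p p' : List (ℝ × ℝ)) : List (ℝ × ℝ) :=
  List.zipWith (fun a b => (a.1, min a.2 b.2)) p p'

/-- The distinguished point contained in the highest path `p⁺_{i,k}`. -/
def highPoint : Setting → ℕ → ℤ → ℝ × ℝ
  | .A _, i, k => ((i : ℝ), (k : ℝ))
  | .B n ε, i, k =>
      if i = n then (2 * (n : ℝ) - 1, (k : ℝ) - ε)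
      else (((iotaB n (i, k)).1 : ℝ), ((iotaB n (i, k)).2 : ℝ))

/-- The distinguished point contained in the lowest path `p⁻_{i,k}`. -/
def lowPoint : Setting → ℕ → ℤ → ℝ × ℝ
  | .A n, i, k => ((n : ℝ) + 1 - (i : ℝ), (k : ℝ) + (n : ℝ) + 1)
  | .B n ε, i, k =>
      if i = n then (2 * (n : ℝ) - 1, (k : ℝ) + 4 * (n : ℝ) - 2 + ε)
      else (((iotaB n (i, k + 4 * (n : ℤ) - 2)).1 : ℝ),
            ((iotaB n (i, k + 4 * (n : ℤ) - 2)).2 : ℝ))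

/-- The highest path `p⁺_{i,k}` : the path of `𝒫_{i,k}` with no lower corners. -/
noncomputable def highestPath (S : Setting) (i : ℕ) (k : ℤ) : List (ℝ × ℝ) :=
  Classical.epsilon fun p => p ∈ P S i k ∧ Cp S p false = ∅

/-- The lowest path `p⁻_{i,k}` : the path of `𝒫_{i,k}` with no upper corners. -/
noncomputable def lowestPath (S : Setting) (i : ℕ) (k : ℤ) : List (ℝ × ℝ) :=
  Classical.epsilon fun p => p ∈ P S i k ∧ Cp S p true = ∅

/-!
The heights of a path form a sequence with steps `±c`, and its lower corners are the strict
interior local maxima of this sequence. A `±c` sequence without such peaks is a vee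
`y t = y v + c |t - v|`, and since both endpoints of a path are fixed, so is the valley `v`: in
type `A` it is the distinguished point `(i, k)`. Conversely, passing through `(i, k)` forces every
step before it to go down and every step after it to go up, so exactly one path does.

In type `B` the argument runs on legs `a_0, …, a_N` whose last step has size `1 + ε`. A spin lower
corner appears as soon as a leg ends with an ascent not matched by a point `2ε` below its end. For
`i = N` the leg must therefore end with a descent, hence descend all the way to `(2N - 1, k - ε)`.
For `i < N` the same forces the second leg to descend all the way and the first one to end with an
ascent to just above the end of the second, which pins the valley of the first leg at `i`. In the
other direction, integrality of the heights squeezes both legs into this shape as soon as the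
first one passes through `ι(i, k)`.
-/

section Zigzag

variable {c : ℝ} {m v : ℕ} {y : ℕ → ℝ}

def IsZigzag (c : ℝ) (m : ℕ) (y : ℕ → ℝ) : Prop :=
  ∀ r < m, y (r + 1) - y r = c ∨ y (r + 1) - y r = -c

def IsPeak (y : ℕ → ℝ) (t : ℕ) : Prop :=
  y (t - 1) < y t ∧ y (t + 1) < y t

def NoPeak (m : ℕ) (y : ℕ → ℝ) : Prop :=
  ∀ t, 0 < t → t < m → ¬IsPeak y t

def IsVee (c : ℝ) (m v : ℕ) (y : ℕ → ℝ) : Prop :=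
  ∀ t ≤ m, y t = y v + c * |(t : ℝ) - v|

theorem IsZigzag.mono {m' : ℕ} (hy : IsZigzag c m y) (h : m' ≤ m) : IsZigzag c m' y :=
  fun r hr => hy r (hr.trans_le h)

theorem NoPeak.mono {m' : ℕ} (hy : NoPeak m y) (h : m' ≤ m) : NoPeak m' y :=
  fun t ht htm => hy t ht (htm.trans_le h)

theorem NoPeak.succ_of_le (hy : NoPeak m y) (hm : y m ≤ y (m + 1)) : NoPeak (m + 1) y := by
  intro t ht htm hpeak
  rcases Nat.lt_succ_iff_lt_or_eq.mp htm with htm | rfl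
  · exact hy t ht htm hpeak
  · exact absurd hpeak.2 hm.not_gt

theorem IsZigzag.exists_eq_add (hy : IsZigzag c m y) :
    ∀ t ≤ m, ∃ d : ℤ, y t = y 0 + c * (t - 2 * d) := by
  intro t ht
  induction t with
  | zero => exact ⟨0, by simp⟩
  | succ t ih =>
    obtain ⟨d, hd⟩ := ih (by omega)
    rcases hy t (by omega) with h | h
    · exact ⟨d, by push_cast; linarith⟩
    · exact ⟨d + 1, by push_cast; linarith⟩

theorem IsZigzag.abs_sub_le (hc : 0 ≤ c) (hy : IsZigzag c m y) {r s : ℕ} (hrs : r ≤ s)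
    (hsm : s ≤ m) : |y s - y r| ≤ c * ((s : ℝ) - r) := by
  induction s, hrs using Nat.le_induction with
  | base => simp
  | succ s hrs ih =>
    have hstep : |y (s + 1) - y s| = c := by
      rcases hy s (by omega) with h | h <;> rw [h] <;> simp [abs_of_nonneg hc]
    calc |y (s + 1) - y r| ≤ |y (s + 1) - y s| + |y s - y r| := _root_.abs_sub_le _ _ _
      _ ≤ c * ((s + 1 : ℕ) - (r : ℝ)) := by rw [hstep]; push_cast; linarith [ih (by omega)]

theorem IsZigzag.eq_sub_of_eq_sub (hc : 0 ≤ c) (hy : IsZigzag c m y) {r s t : ℕ}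
    (hrt : r ≤ t) (hts : t ≤ s) (hsm : s ≤ m) (h : y s = y r - c * ((s : ℝ) - r)) :
    y t = y r - c * ((t : ℝ) - r) := by
  have h₁ := abs_le.mp (hy.abs_sub_le hc hrt (hts.trans hsm))
  have h₂ := abs_le.mp (hy.abs_sub_le hc hts hsm)
  linarith [h₁.1, h₂.1]

theorem IsZigzag.eq_add_of_eq_add (hc : 0 ≤ c) (hy : IsZigzag c m y) {r s t : ℕ}
    (hrt : r ≤ t) (hts : t ≤ s) (hsm : s ≤ m) (h : y s = y r + c * ((s : ℝ) - r)) :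
    y t = y r + c * ((t : ℝ) - r) := by
  have h₁ := abs_le.mp (hy.abs_sub_le hc hrt (hts.trans hsm))
  have h₂ := abs_le.mp (hy.abs_sub_le hc hts hsm)
  linarith [h₁.2, h₂.2]

theorem IsZigzag.isVee_of_eq (hc : 0 ≤ c) (hy : IsZigzag c m y) (hvm : v ≤ m)
    (h₀ : y v = y 0 - c * v) (hm : y m = y v + c * ((m : ℝ) - v)) : IsVee c m v y := by
  intro t htm
  rcases le_total t v with htv | hvt
  · have := hy.eq_sub_of_eq_sub hc (Nat.zero_le t) htv hvm (by simpa using h₀)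
    rw [abs_of_nonpos (sub_nonpos.mpr (Nat.cast_le.mpr htv))]
    simp only [CharP.cast_eq_zero, sub_zero] at this
    linarith
  · rw [hy.eq_add_of_eq_add hc hvt htm le_rfl hm,
      abs_of_nonneg (sub_nonneg.mpr (Nat.cast_le.mpr hvt))]

theorem IsVee.sub_eq (h : IsVee c m v y) (hvm : v ≤ m) : y m - y 0 = c * ((m : ℝ) - 2 * v) := by
  rw [h m le_rfl, h 0 (Nat.zero_le _), abs_of_nonneg (sub_nonneg.mpr (Nat.cast_le.mpr hvm)),
    Nat.cast_zero, zero_sub, abs_neg, Nat.abs_cast]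
  ring

theorem IsVee.noPeak (hc : 0 < c) (h : IsVee c m v y) : NoPeak m y := by
  intro t ht htm ⟨hl, hr⟩
  have e := h t htm.le
  rcases le_or_gt t v with htv | hvt
  · have htv' : (t : ℝ) ≤ v := Nat.cast_le.mpr htv
    have e' := h (t - 1) (by omega)
    rw [Nat.cast_sub (by omega), Nat.cast_one, abs_of_nonpos (by linarith)] at e'
    rw [abs_of_nonpos (by linarith)] at e
    linarith
  · have hvt' : (v : ℝ) < t := Nat.cast_lt.mpr hvt
    have e' := h (t + 1) htm
    rw [Nat.cast_succ, abs_of_pos (by linarith)] at e'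
    rw [abs_of_pos (by linarith)] at e
    linarith

theorem IsZigzag.exists_isVee (hc : 0 < c) (hy : IsZigzag c m y) (hp : NoPeak m y) :
    ∃ v ≤ m, IsVee c m v y := by
  induction m with
  | zero => exact ⟨0, le_rfl, fun t ht => by obtain rfl := Nat.le_zero.mp ht; simp⟩
  | succ m ih =>
    obtain ⟨v, hvm, hv⟩ := ih (hy.mono m.le_succ) (hp.mono m.le_succ)
    have extend : ∀ v' : ℕ, y (m + 1) = y v' + c * |((m + 1 : ℕ) : ℝ) - v'| →
        (∀ t ≤ m, y t = y v' + c * |(t : ℝ) - v'|) → IsVee c (m + 1) v' y := by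
      intro v' hlast hle t ht
      rcases Nat.lt_succ_iff_lt_or_eq.mp (Nat.lt_succ_of_le ht) with ht | rfl
      · exact hle t (by omega)
      · exact hlast
    have hym : y m = y v + c * ((m : ℝ) - v) := by
      rw [hv m le_rfl, abs_of_nonneg (sub_nonneg.mpr (Nat.cast_le.mpr hvm))]
    rcases hy m (Nat.lt_succ_self m) with hup | hdown
    · refine ⟨v, by omega, extend v ?_ hv⟩
      rw [abs_of_nonneg (sub_nonneg.mpr (Nat.cast_le.mpr (by omega)))]
      push_cast
      linarith
    · rcases Nat.lt_or_eq_of_le hvm with hvm | rfl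
      · -- an up-step into `m` followed by a down-step is a peak at `m`
        have hym' : y (m - 1) = y v + c * (((m - 1 : ℕ) : ℝ) - v) := by
          rw [hv (m - 1) (by omega), abs_of_nonneg (sub_nonneg.mpr (Nat.cast_le.mpr (by omega)))]
        rw [Nat.cast_sub (by omega), Nat.cast_one] at hym'
        exact absurd ⟨by linarith, by linarith⟩ (hp m (by omega) (Nat.lt_succ_self m))
      · refine ⟨v + 1, le_rfl, extend (v + 1) (by simp) fun t ht => ?_⟩
        rw [hv t ht, abs_of_nonpos (sub_nonpos.mpr (Nat.cast_le.mpr ht)),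
          abs_of_nonpos (sub_nonpos.mpr (Nat.cast_le.mpr (by omega)))]
        push_cast
        linarith

theorem IsZigzag.eq_sub_of_noPeak (hc : 0 < c) (hy : IsZigzag c m y) (hp : NoPeak (m + 1) y)
    (hm : 0 < m) (hlast : y (m + 1) < y m) : y m = y 0 - c * m := by
  obtain ⟨v, hvm, hv⟩ := hy.exists_isVee hc (hp.mono m.le_succ)
  obtain rfl : v = m := by
    by_contra hne
    have e := hv (m - 1) (by omega)
    have e' := hv m le_rfl
    rw [abs_of_nonneg (sub_nonneg.mpr (Nat.cast_le.mpr (by omega))), Nat.cast_sub hm,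
      Nat.cast_one] at e
    rw [abs_of_nonneg (sub_nonneg.mpr (Nat.cast_le.mpr hvm))] at e'
    exact hp m hm (Nat.lt_succ_self m) ⟨by linarith, hlast⟩
  linarith [hv.sub_eq le_rfl]

theorem IsZigzag.noPeak_of_eq_sub (hc : 0 ≤ c) (hy : IsZigzag c m y)
    (h : y m = y 0 - c * m) : NoPeak (m + 1) y := by
  intro t ht htm ⟨hl, _⟩
  have h' : y m = y 0 - c * ((m : ℝ) - (0 : ℕ)) := by simpa using h
  have e := hy.eq_sub_of_eq_sub hc (Nat.zero_le t) (Nat.lt_succ_iff.mp htm) le_rfl h'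
  have e' := hy.eq_sub_of_eq_sub hc (Nat.zero_le (t - 1)) (by omega) le_rfl h'
  rw [Nat.cast_sub ht, Nat.cast_one] at e'
  linarith

theorem isZigzag_vee (a c : ℝ) (m v : ℕ) : IsZigzag c m fun r => a + c * |(r : ℝ) - v| := by
  intro r _
  push_cast
  rcases lt_or_ge r v with hrv | hvr
  · have hrv' : (r : ℝ) + 1 ≤ v := by exact_mod_cast hrv
    right
    rw [abs_of_nonpos (by linarith), abs_of_nonpos (by linarith)]
    ring
  · have hvr' : (v : ℝ) ≤ r := Nat.cast_le.mpr hvr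
    left
    rw [abs_of_nonneg (by linarith), abs_of_nonneg (by linarith)]
    ring

end Zigzag

section Points

variable {p a b : List (ℝ × ℝ)} {q : ℝ × ℝ} {n r s : ℕ}

abbrev height (p : List (ℝ × ℝ)) (r : ℕ) : ℝ := (pt p r).2

theorem pt_eq_getElem (h : r < p.length) : pt p r = p[r] :=
  List.getD_eq_getElem p (0, 0) h

theorem pt_mem (h : r < p.length) : pt p r ∈ p := by
  rw [pt_eq_getElem h]
  exact List.getElem_mem h

theorem exists_pt_eq_of_mem (h : q ∈ p) : ∃ r < p.length, pt p r = q := by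
  obtain ⟨r, hr, rfl⟩ := List.getElem_of_mem h
  exact ⟨r, hr, pt_eq_getElem hr⟩

theorem pt_ofFn {m : ℕ} (f : Fin m → ℝ × ℝ) (h : r < m) :
    pt (List.ofFn f) r = f ⟨r, h⟩ := by
  rw [pt_eq_getElem (by simpa using h), List.getElem_ofFn]

theorem eq_of_pt_eq {p' : List (ℝ × ℝ)} (hl : p.length = p'.length)
    (h : ∀ r < p.length, pt p r = pt p' r) : p = p' :=
  List.ext_getElem hl fun r h₁ h₂ => by
    rw [← pt_eq_getElem h₁, ← pt_eq_getElem h₂, h r h₁]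

theorem pt_append_of_lt (h : r < a.length) : pt (a ++ b) r = pt a r :=
  List.getD_append a b _ r h

theorem pt_append_reverse (hs : s < b.length) :
    pt (a ++ b.reverse) (a.length + s) = pt b (b.length - 1 - s) := by
  rw [pt, List.getD_append_right _ _ _ _ (Nat.le_add_right _ _), Nat.add_sub_cancel_left,
    List.getD_reverse _ hs]
  rfl

theorem pt_append_reverse_right (ha : a.length = n + 1) (hb : b.length = n + 1) (hs : s ≤ n) :
    pt (a ++ b.reverse) (n + 1 + s) = pt b (n - s) := by
  rw [← ha, pt_append_reverse (by omega), hb]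
  congr 1

theorem isPeak_append_reverse_left_iff (ha : a.length = n + 1) (hr : r < n) :
    IsPeak (height (a ++ b.reverse)) r ↔ IsPeak (height a) r := by
  simp only [IsPeak, height, pt_append_of_lt (show r - 1 < a.length by omega),
    pt_append_of_lt (show r < a.length by omega), pt_append_of_lt (show r + 1 < a.length by omega)]

theorem isPeak_append_reverse_right_iff (ha : a.length = n + 1) (hb : b.length = n + 1)
    (hs : 0 < s) (hsn : s < n) :
    IsPeak (height (a ++ b.reverse)) (n + 1 + s) ↔ IsPeak (height b) (n - s) := by
  have e₀ := pt_append_reverse_right (s := s) ha hb hsn.le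
  have e₁ := pt_append_reverse_right (s := s - 1) ha hb (by omega)
  have e₂ := pt_append_reverse_right (s := s + 1) ha hb hsn
  rw [show n + 1 + (s - 1) = n + 1 + s - 1 by omega, show n - (s - 1) = n - s + 1 by omega] at e₁
  rw [show n + 1 + (s + 1) = n + 1 + s + 1 by omega, show n - (s + 1) = n - s - 1 by omega] at e₂
  simp only [IsPeak, height, e₀, e₁, e₂]
  exact and_comm

end Points

theorem intCast_add_ne_intCast_sub {ε : ℝ} (hε : 0 < ε) (hε' : ε < 1 / 2) (w z : ℤ) :
    (w : ℝ) + ε ≠ z - ε := by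
  intro h
  have h₁ : ((0 : ℤ) : ℝ) < ((z - w : ℤ) : ℝ) := by push_cast; linarith
  have h₂ : ((z - w : ℤ) : ℝ) < ((1 : ℤ) : ℝ) := by push_cast; linarith
  have := Int.cast_lt.mp h₁
  have := Int.cast_lt.mp h₂
  omega

theorem existsUnique_and_iff_of_eq {α : Type*} {s : Set α} {P Q : α → Prop} {a : α}
    (ha : a ∈ s) (hQa : Q a) (hPQ : ∀ p ∈ s, P p → Q p) (hQP : ∀ p ∈ s, Q p → P p)
    (heq : ∀ p ∈ s, Q p → p = a) :
    (∃! p, p ∈ s ∧ P p) ∧ ∀ p ∈ s, (P p ↔ Q p) :=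
  ⟨⟨a, ⟨ha, hQP a ha hQa⟩, fun p ⟨hp, hPp⟩ => heq p hp (hPQ p hp hPp)⟩,
    fun p hp => ⟨hPQ p hp, hQP p hp⟩⟩

section TypeA

variable {n i : ℕ} {k : ℤ} {p : List (ℝ × ℝ)}

theorem mem_pathsA_iff : p ∈ pathsA n i k ↔
    p.length = n + 2 ∧ (∀ r < n + 2, (pt p r).1 = r) ∧ height p 0 = i + k ∧
      height p (n + 1) = n + 1 - i + k ∧ IsZigzag 1 (n + 1) (height p) := by
  simp only [pathsA, Set.mem_ofPred_eq, IsZigzag, Nat.lt_succ_iff]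

theorem mem_Cp_A_false {j : ℕ} {l : ℤ} :
    (j, l) ∈ Cp (.A n) p false ↔ 1 ≤ j ∧ j ≤ n ∧ pt p j = ((j : ℝ), (l : ℝ)) ∧
      height p (j - 1) = l - 1 ∧ height p (j + 1) = l - 1 := by
  simp [Cp, sub_eq_add_neg]

theorem Cp_A_false_eq_empty_iff (hp : p ∈ pathsA n i k) :
    Cp (.A n) p false = ∅ ↔ NoPeak (n + 1) (height p) := by
  obtain ⟨-, hx, h₀, -, hy⟩ := mem_pathsA_iff.mp hp
  constructor
  · intro hC t ht htn ⟨hl, hr⟩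
    obtain ⟨d, hd⟩ := hy.exists_eq_add t htn.le
    have hcorner : (t, (i + k + t - 2 * d : ℤ)) ∈ Cp (.A n) p false := by
      have hl' := hy (t - 1) (by omega)
      have hr' := hy t htn
      rw [Nat.sub_add_cancel ht] at hl'
      refine mem_Cp_A_false.mpr ⟨ht, by omega, Prod.ext (hx t (by omega)) ?_, ?_, ?_⟩ <;>
        push_cast <;> rw [h₀] at hd
      · linarith
      · rcases hl' with h | h <;> linarith
      · rcases hr' with h | h <;> linarith
    simp [hC] at hcorner
  · intro hnp
    ext ⟨j, l⟩
    simp only [Set.mem_empty_iff_false, iff_false, mem_Cp_A_false]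
    rintro ⟨hj, hjn, hpt, hl, hr⟩
    have hj' : height p j = l := congrArg Prod.snd hpt
    exact hnp j hj (by omega) ⟨by linarith, by linarith⟩

theorem height_eq_of_noPeak_A (hp : p ∈ pathsA n i k) (hnp : NoPeak (n + 1) (height p)) :
    height p i = k := by
  obtain ⟨-, -, h₀, hend, hy⟩ := mem_pathsA_iff.mp hp
  obtain ⟨v, hvn, hv⟩ := hy.exists_isVee one_pos hnp
  have hsub := hv.sub_eq hvn
  have hv₀ := hv 0 (Nat.zero_le _)
  rw [h₀, hend] at hsub
  rw [h₀] at hv₀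
  obtain rfl : v = i := by
    have : (v : ℝ) = i := by push_cast at hsub; linarith
    exact_mod_cast this
  simp only [CharP.cast_eq_zero, zero_sub, abs_neg, Nat.abs_cast] at hv₀
  linarith

theorem isVee_of_mem_pathsA (hp : p ∈ pathsA n i k) (hin : i ≤ n)
    (h : ((i : ℝ), (k : ℝ)) ∈ p) : IsVee 1 (n + 1) i (height p) ∧ height p i = k := by
  obtain ⟨hlen, hx, h₀, hend, hy⟩ := mem_pathsA_iff.mp hp
  obtain ⟨r, hr, hpr⟩ := exists_pt_eq_of_mem h
  obtain rfl : i = r := by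
    have : (i : ℝ) = r := by rw [← hx r (hlen ▸ hr), hpr]
    exact_mod_cast this
  have hi : height p i = k := by rw [height, hpr]
  refine ⟨hy.isVee_of_eq zero_le_one (by omega) ?_ ?_, hi⟩
  · rw [hi, h₀]; ring
  · rw [hi, hend]; push_cast; ring

noncomputable def highA (n i : ℕ) (k : ℤ) : List (ℝ × ℝ) :=
  List.ofFn fun r : Fin (n + 2) => ((r : ℝ), k + |(r : ℝ) - i|)

theorem highA_mem (hin : i ≤ n) : highA n i k ∈ pathsA n i k := by
  have hpt : ∀ r < n + 2, pt (highA n i k) r = ((r : ℝ), k + |(r : ℝ) - i|) :=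
    fun r hr => pt_ofFn _ hr
  refine ⟨by simp [highA], fun r hr => by rw [hpt r hr], ?_, ?_, fun r hr => ?_⟩
  · rw [hpt 0 (by omega)]
    simp [add_comm]
  · have hin' : (i : ℝ) ≤ n := Nat.cast_le.mpr hin
    rw [hpt (n + 1) (by omega), abs_of_nonneg (by push_cast; linarith)]
    push_cast
    ring
  · rw [hpt r (by omega), hpt (r + 1) (by omega)]
    simpa using isZigzag_vee (k : ℝ) 1 (n + 1) i r (by omega)

theorem highPoint_mem_highA (hin : i ≤ n) : ((i : ℝ), (k : ℝ)) ∈ highA n i k := by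
  have h := pt_mem (p := highA n i k) (r := i) (by rw [highA, List.length_ofFn]; omega)
  rwa [highA, pt_ofFn _ (by omega), sub_self, abs_zero, add_zero] at h

theorem eq_highA (hp : p ∈ pathsA n i k) (hin : i ≤ n) (h : ((i : ℝ), (k : ℝ)) ∈ p) :
    p = highA n i k := by
  obtain ⟨hv, hi⟩ := isVee_of_mem_pathsA hp hin h
  refine eq_of_pt_eq (by simp [highA, hp.1]) fun r hr => ?_
  rw [hp.1] at hr
  rw [highA, pt_ofFn _ hr, ← hi]
  exact Prod.ext (hp.2.1 r hr) ((hv r (by omega)).trans (by rw [one_mul]))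

theorem pathsA_highest (hin : i ≤ n) :
    (∃! p, p ∈ pathsA n i k ∧ Cp (.A n) p false = ∅) ∧
      ∀ p ∈ pathsA n i k, (Cp (.A n) p false = ∅ ↔ ((i : ℝ), (k : ℝ)) ∈ p) := by
  refine existsUnique_and_iff_of_eq (highA_mem hin) (highPoint_mem_highA hin) ?_ ?_
    fun p hp h => eq_highA hp hin h
  · intro p hp hC
    have := pt_mem (p := p) (r := i) (by rw [hp.1]; omega)
    rwa [show pt p i = ((i : ℝ), (k : ℝ)) from Prod.ext (hp.2.1 i (by omega))
      (height_eq_of_noPeak_A hp ((Cp_A_false_eq_empty_iff hp).mp hC))] at this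
  · intro p hp h
    exact (Cp_A_false_eq_empty_iff hp).mpr ((isVee_of_mem_pathsA hp hin h).1.noPeak one_pos)

end TypeA

section SpinLeg

variable {n : ℕ} {ε : ℝ} {l : ℤ} {a : List (ℝ × ℝ)}

def legX (n : ℕ) (l : ℤ) (r : ℕ) : ℤ :=
  if l % 4 = 3 then 2 * r else 4 * n - 2 - 2 * r

theorem legX_ne_two_mul_sub_one (r : ℕ) : (legX n l r : ℝ) ≠ 2 * n - 1 := by
  intro h
  have h' : legX n l r = 2 * n - 1 := by exact_mod_cast h
  unfold legX at h'
  split_ifs at h' <;> omega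

theorem legX_injective {r s : ℕ} (h : legX n l r = legX n l s) : r = s := by
  unfold legX at h
  split_ifs at h <;> omega

theorem legX_ne_legX {l' : ℤ} (hl : l % 2 = 1) (hl' : (l' - l) % 4 = 2) {r s : ℕ} (hr : r < n)
    (hs : s < n) : legX n l r ≠ legX n l' s := by
  unfold legX
  split_ifs <;> omega

theorem mem_pathsBspin_iff : a ∈ pathsBspin n ε l ↔ a.length = n + 1 ∧
    (∀ r < n, (pt a r).1 = legX n l r) ∧ (pt a n).1 = 2 * n - 1 ∧
    height a 0 = l + 2 * n - 1 ∧ IsZigzag 2 (n - 1) (height a) ∧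
    (height a n - height a (n - 1) = 1 + ε ∨ height a n - height a (n - 1) = -(1 + ε)) := by
  have hx : ((if l % 4 = 3 then ∀ r, r < n → (pt a r).1 = 2 * (r : ℝ)
      else ∀ r, r < n → (pt a r).1 = 4 * (n : ℝ) - 2 - 2 * (r : ℝ)) ↔
      ∀ r < n, (pt a r).1 = legX n l r) := by
    unfold legX
    split_ifs <;> push_cast <;> rfl
  have hy : (∀ r, r + 2 ≤ n → (pt a (r + 1)).2 - (pt a r).2 = 2 ∨
      (pt a (r + 1)).2 - (pt a r).2 = -2) ↔ IsZigzag 2 (n - 1) (height a) :=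
    forall_congr' fun r => ⟨fun h hr => h (by omega), fun h hr => h (by omega)⟩
  simp only [pathsBspin, Set.mem_ofPred_eq, hx, hy]

theorem exists_height_eq_of_mem_pathsBspin (ha : a ∈ pathsBspin n ε l) :
    ∀ t ≤ n - 1, ∃ d : ℤ, height a t = ((l + 2 * n - 1 + 2 * t - 4 * d : ℤ) : ℝ) := by
  obtain ⟨-, -, -, h₀, hy, -⟩ := mem_pathsBspin_iff.mp ha
  intro t ht
  obtain ⟨d, hd⟩ := hy.exists_eq_add t ht
  exact ⟨d, by rw [hd, h₀]; push_cast; ring⟩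

theorem iotaB_of_mod_four {t : ℕ} (hl : l % 2 = 1) (ht : t ≠ n) (d : ℤ) :
    iotaB n (t, l + 2 * n - 1 + 2 * t - 4 * d) = (legX n l t, l + 2 * n - 1 + 2 * t - 4 * d) := by
  unfold iotaB legX
  simp only [ht, if_false]
  split_ifs <;> first | rfl | omega

theorem eq_pt_of_mem_pathsBspin (ha : a ∈ pathsBspin n ε l) {q : ℝ × ℝ} (hq : q ∈ a) :
    q = pt a n ∨ ∃ r < n, q = pt a r ∧ q.1 = legX n l r := by
  obtain ⟨hlen, hx, -⟩ := mem_pathsBspin_iff.mp ha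
  obtain ⟨r, hr, rfl⟩ := exists_pt_eq_of_mem hq
  rcases Nat.lt_or_ge r n with hrn | hrn
  · exact Or.inr ⟨r, hrn, rfl, hx r hrn⟩
  · exact Or.inl (by rw [show r = n by omega])

theorem eq_pt_last_of_mem_pathsBspin (ha : a ∈ pathsBspin n ε l) {q : ℝ × ℝ} (hq : q ∈ a)
    (hx : q.1 = 2 * n - 1) : q = pt a n := by
  rcases eq_pt_of_mem_pathsBspin ha hq with h | ⟨r, -, -, hr⟩
  · exact h
  · exact absurd (hr ▸ hx) (legX_ne_two_mul_sub_one r)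

end SpinLeg

section CornersB

variable {n : ℕ} {ε : ℝ} {p : List (ℝ × ℝ)}

theorem mem_Cp_B_false {jl : ℕ × ℤ} : jl ∈ Cp (.B n ε) p false ↔ jl ∈ XB n ∧
    ((∃ r, 1 ≤ r ∧ r + 1 < p.length ∧
        pt p r = (((iotaB n jl).1 : ℝ), ((iotaB n jl).2 : ℝ)) ∧
        (iotaB n jl).1 ≠ 0 ∧ (iotaB n jl).1 ≠ 2 * (n : ℤ) - 1 ∧
        (iotaB n jl).1 ≠ 4 * (n : ℤ) - 2 ∧ IsPeak (height p) r) ∨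
      (jl.1 = n ∧ (2 * (n : ℝ) - 1, (jl.2 : ℝ) + ε) ∈ p ∧
        (2 * (n : ℝ) - 1, (jl.2 : ℝ) - ε) ∉ p)) := by
  simp only [Cp, Bool.false_eq_true, ↓reduceIte]
  rfl

theorem peak_or_spin_of_mem_Cp_B {jl : ℕ × ℤ} (h : jl ∈ Cp (.B n ε) p false) :
    (∃ r, 0 < r ∧ r + 1 < p.length ∧ (pt p r).1 ≠ 2 * n - 1 ∧ IsPeak (height p) r) ∨
      ∃ w : ℤ, (2 * (n : ℝ) - 1, (w : ℝ) + ε) ∈ p ∧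
        (2 * (n : ℝ) - 1, (w : ℝ) - ε) ∉ p := by
  rcases (mem_Cp_B_false.mp h).2 with ⟨r, hr, hrp, hpt, -, hx, -, hpeak⟩ | ⟨-, hin, hout⟩
  · refine Or.inl ⟨r, hr, hrp, fun h => hx ?_, hpeak⟩
    rw [hpt] at h
    dsimp only at h
    exact_mod_cast h
  · exact Or.inr ⟨jl.2, hin, hout⟩

theorem mem_Cp_B_of_spin {w : ℤ} (hw : w % 2 = 1)
    (hin : (2 * (n : ℝ) - 1, (w : ℝ) + ε) ∈ p)
    (hout : (2 * (n : ℝ) - 1, (w : ℝ) - ε) ∉ p) : (n, w) ∈ Cp (.B n ε) p false :=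
  mem_Cp_B_false.mpr ⟨Or.inl ⟨rfl, hw⟩, Or.inr ⟨rfl, hin, hout⟩⟩

variable {l : ℤ} {a : List (ℝ × ℝ)}

theorem Cp_nonempty_of_legPeak (ha : a ∈ pathsBspin n ε l) (hl : l % 2 = 1) {t : ℕ}
    (ht : 0 < t) (htn : t < n) {r : ℕ} (hr : 0 < r) (hrp : r + 1 < p.length)
    (hpr : pt p r = pt a t) (hpeak : IsPeak (height p) r) : (Cp (.B n ε) p false).Nonempty := by
  obtain ⟨-, hx, -⟩ := mem_pathsBspin_iff.mp ha
  obtain ⟨d, hd⟩ := exists_height_eq_of_mem_pathsBspin ha t (by omega)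
  have hι := iotaB_of_mod_four (n := n) hl htn.ne d
  refine ⟨(t, l + 2 * n - 1 + 2 * t - 4 * d),
    mem_Cp_B_false.mpr ⟨Or.inr ⟨ht, htn, by omega⟩, Or.inl ⟨r, hr, hrp, ?_, ?_⟩⟩⟩
  · rw [hι, hpr]
    exact Prod.ext (hx t htn) hd
  · rw [hι]
    refine ⟨?_, ?_, ?_, hpeak⟩ <;> dsimp only <;> unfold legX <;> split_ifs <;> omega

theorem Cp_nonempty_of_lastStep_up (ha : a ∈ pathsBspin n ε l) (hl : l % 2 = 1)
    (hsub : a ⊆ p) (hup : height a n - height a (n - 1) = 1 + ε)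
    (hout : (2 * (n : ℝ) - 1, height a n - 2 * ε) ∉ p) : (Cp (.B n ε) p false).Nonempty := by
  obtain ⟨hlen, -, hxn, -⟩ := mem_pathsBspin_iff.mp ha
  obtain ⟨d, hd⟩ := exists_height_eq_of_mem_pathsBspin ha (n - 1) le_rfl
  refine ⟨_, mem_Cp_B_of_spin (w := l + 2 * n - 1 + 2 * (n - 1 : ℕ) - 4 * d + 1)
    (by omega) ?_ ?_⟩
  · have hmem := hsub (pt_mem (p := a) (r := n) (by omega))
    convert hmem using 1
    refine Prod.ext hxn.symm ?_
    push_cast at hd ⊢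
    linarith
  · convert hout using 3
    push_cast at hd ⊢
    linarith

end CornersB

section SpinLegShape

variable {n v : ℕ} {ε h₀ e : ℝ} {l : ℤ} {a : List (ℝ × ℝ)}

noncomputable def veeLeg (n : ℕ) (l : ℤ) (h₀ : ℝ) (v : ℕ) (e : ℝ) : List (ℝ × ℝ) :=
  List.ofFn fun r : Fin (n + 1) =>
    if (r : ℕ) = n then (2 * (n : ℝ) - 1, e)
    else ((legX n l r : ℝ), h₀ + 2 * |(r : ℝ) - v|)

theorem pt_veeLeg {r : ℕ} (hr : r < n + 1) :
    pt (veeLeg n l h₀ v e) r =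
      if r = n then (2 * (n : ℝ) - 1, e) else ((legX n l r : ℝ), h₀ + 2 * |(r : ℝ) - v|) :=
  pt_ofFn _ hr

theorem veeLeg_mem_pathsBspin (hn : 1 ≤ n) (hv : v ≤ n - 1)
    (hstart : h₀ + 2 * v = l + 2 * n - 1)
    (hlast : e - (h₀ + 2 * ((n : ℝ) - 1 - v)) = 1 + ε ∨
      e - (h₀ + 2 * ((n : ℝ) - 1 - v)) = -(1 + ε)) :
    veeLeg n l h₀ v e ∈ pathsBspin n ε l := by
  have hpt : ∀ r < n,
      pt (veeLeg n l h₀ v e) r = ((legX n l r : ℝ), h₀ + 2 * |(r : ℝ) - v|) :=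
    fun r hr => by rw [pt_veeLeg (by omega), if_neg hr.ne]
  have hlast' : pt (veeLeg n l h₀ v e) n = (2 * (n : ℝ) - 1, e) := by
    rw [pt_veeLeg (by omega), if_pos rfl]
  refine mem_pathsBspin_iff.mpr ⟨by simp [veeLeg], fun r hr => by rw [hpt r hr],
    by rw [hlast'], ?_, fun r hr => ?_, ?_⟩
  · rw [height, hpt 0 (by omega)]
    simpa using hstart
  · rw [height, height, hpt r (by omega), hpt (r + 1) (by omega)]
    exact isZigzag_vee h₀ 2 (n - 1) v r hr
  · have hv' : (v : ℝ) ≤ n - 1 := by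
      rw [← Nat.cast_one, ← Nat.cast_sub hn]
      exact Nat.cast_le.mpr hv
    rw [height, height, hlast', hpt (n - 1) (by omega), Nat.cast_sub hn, Nat.cast_one,
      abs_of_nonneg (by linarith)]
    exact hlast

theorem eq_veeLeg_of_isVee (ha : a ∈ pathsBspin n ε l)
    (hv : IsVee 2 (n - 1) v (height a)) : a = veeLeg n l (height a v) v (height a n) := by
  obtain ⟨hlen, hx, hxn, -⟩ := mem_pathsBspin_iff.mp ha
  refine eq_of_pt_eq (by simp [veeLeg, hlen]) fun r hr => ?_
  rw [pt_veeLeg (by omega)]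
  split_ifs with hrn
  · subst hrn
    exact Prod.ext hxn rfl
  · exact Prod.ext (hx r (by omega)) (hv r (by omega))

theorem height_pred_eq_of_noPeak (hn : 2 ≤ n) (hε : 0 < ε) (ha : a ∈ pathsBspin n ε l)
    (hnp : NoPeak n (height a)) (hdown : height a n - height a (n - 1) = -(1 + ε)) :
    height a (n - 1) = l + 1 := by
  obtain ⟨-, -, -, h₀, hy, -⟩ := mem_pathsBspin_iff.mp ha
  have hn' : n - 1 + 1 = n := by omega
  have := hy.eq_sub_of_noPeak two_pos (hn' ▸ hnp) (by omega) (by rw [hn']; linarith)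
  rw [this, h₀, Nat.cast_sub (by omega)]
  push_cast
  ring

theorem noPeak_of_height_pred_eq (hn : 1 ≤ n) (ha : a ∈ pathsBspin n ε l)
    (h : height a (n - 1) = l + 1) : NoPeak n (height a) := by
  obtain ⟨-, -, -, h₀, hy, -⟩ := mem_pathsBspin_iff.mp ha
  have := hy.noPeak_of_eq_sub zero_le_two (by rw [h, h₀, Nat.cast_sub hn]; push_cast; ring)
  rwa [Nat.sub_add_cancel hn] at this

theorem isVee_of_height_pred_eq (hn : 1 ≤ n) (ha : a ∈ pathsBspin n ε l)
    (h : height a (n - 1) = l + 1) : IsVee 2 (n - 1) (n - 1) (height a) := by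
  obtain ⟨-, -, -, h₀, hy, -⟩ := mem_pathsBspin_iff.mp ha
  exact hy.isVee_of_eq zero_le_two le_rfl
    (by rw [h, h₀, Nat.cast_sub hn]; push_cast; ring) (by simp)

theorem height_pred_eq_of_height_eq (hn : 1 ≤ n) (hε : 0 < ε) (ha : a ∈ pathsBspin n ε l)
    (h : height a n = l - ε) :
    height a (n - 1) = l + 1 ∧ height a n - height a (n - 1) = -(1 + ε) := by
  obtain ⟨-, -, -, h₀, hy, hlast⟩ := mem_pathsBspin_iff.mp ha
  have hbound := (abs_le.mp (hy.abs_sub_le zero_le_two (Nat.zero_le (n - 1)) le_rfl)).1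
  rw [h₀, Nat.cast_sub hn] at hbound
  push_cast at hbound
  rcases hlast with hup | hdown
  · linarith
  · exact ⟨by linarith, hdown⟩

end SpinLegShape

section SpinNode

variable {n : ℕ} {ε : ℝ} {k : ℤ} {a : List (ℝ × ℝ)}

theorem highPoint_mem_of_Cp_eq_empty_spin (hn : 2 ≤ n) (hε : 0 < ε) (hk : k % 2 = 1)
    (ha : a ∈ pathsBspin n ε k) (hC : Cp (.B n ε) a false = ∅) :
    (2 * (n : ℝ) - 1, (k : ℝ) - ε) ∈ a := by
  obtain ⟨hlen, -, hxn, -, -, hlast⟩ := mem_pathsBspin_iff.mp ha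
  have hnp : NoPeak n (height a) := fun t ht htn hpeak =>
    (Cp_nonempty_of_legPeak ha hk ht htn ht (by omega) rfl hpeak).ne_empty hC
  have hdown : height a n - height a (n - 1) = -(1 + ε) := by
    refine hlast.resolve_left fun hup => (Cp_nonempty_of_lastStep_up ha hk (List.Subset.refl a) hup
      fun hmem => ?_).ne_empty hC
    have := congrArg Prod.snd (eq_pt_last_of_mem_pathsBspin ha hmem rfl)
    dsimp only at this
    linarith
  have hpred := height_pred_eq_of_noPeak hn hε ha hnp hdown
  convert pt_mem (p := a) (r := n) (by omega) using 1
  exact (Prod.ext hxn (by linarith)).symm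

theorem height_eq_of_highPoint_mem_spin (hn : 1 ≤ n) (hε : 0 < ε) (ha : a ∈ pathsBspin n ε k)
    (h : (2 * (n : ℝ) - 1, (k : ℝ) - ε) ∈ a) :
    height a n = k - ε ∧ height a (n - 1) = k + 1 := by
  have hn' : height a n = k - ε := by rw [height, ← eq_pt_last_of_mem_pathsBspin ha h rfl]
  exact ⟨hn', (height_pred_eq_of_height_eq hn hε ha hn').1⟩

theorem Cp_eq_empty_of_highPoint_mem_spin (hn : 1 ≤ n) (hε : 0 < ε) (hε' : ε < 1 / 2)
    (ha : a ∈ pathsBspin n ε k) (h : (2 * (n : ℝ) - 1, (k : ℝ) - ε) ∈ a) :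
    Cp (.B n ε) a false = ∅ := by
  obtain ⟨hlen, -⟩ := mem_pathsBspin_iff.mp ha
  obtain ⟨hlast, hpred⟩ := height_eq_of_highPoint_mem_spin hn hε ha h
  have hnp := noPeak_of_height_pred_eq hn ha hpred
  refine Set.eq_empty_of_forall_notMem fun jl hjl => ?_
  rcases peak_or_spin_of_mem_Cp_B hjl with ⟨r, hr, hra, -, hpeak⟩ | ⟨w, hw, -⟩
  · exact hnp r hr (by omega) hpeak
  · have := congrArg Prod.snd (eq_pt_last_of_mem_pathsBspin ha hw rfl)
    exact intCast_add_ne_intCast_sub hε hε' w k (this.trans hlast)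

theorem pathsBspin_highest (hn : 2 ≤ n) (hε : 0 < ε) (hε' : ε < 1 / 2) (hk : k % 2 = 1) :
    (∃! p, p ∈ pathsBspin n ε k ∧ Cp (.B n ε) p false = ∅) ∧
      ∀ p ∈ pathsBspin n ε k,
        (Cp (.B n ε) p false = ∅ ↔ (2 * (n : ℝ) - 1, (k : ℝ) - ε) ∈ p) := by
  have hmem : veeLeg n k (k + 1) (n - 1) (k - ε) ∈ pathsBspin n ε k :=
    veeLeg_mem_pathsBspin (by omega) le_rfl
      (by rw [Nat.cast_sub (by omega)]; push_cast; ring)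
      (Or.inr (by rw [Nat.cast_sub (by omega)]; push_cast; ring))
  have hhigh : (2 * (n : ℝ) - 1, (k : ℝ) - ε) ∈ veeLeg n k (k + 1) (n - 1) (k - ε) := by
    convert pt_mem (p := veeLeg n k (k + 1) (n - 1) (k - ε)) (r := n) (by simp [veeLeg]) using 1
    rw [pt_veeLeg (by omega), if_pos rfl]
  refine existsUnique_and_iff_of_eq hmem hhigh
    (fun p hp hC => highPoint_mem_of_Cp_eq_empty_spin hn hε hk hp hC)
    (fun p hp h => Cp_eq_empty_of_highPoint_mem_spin (by omega) hε hε' hp h) fun p hp h => ?_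
  obtain ⟨hlast, hpred⟩ := height_eq_of_highPoint_mem_spin (by omega) hε hp h
  rw [eq_veeLeg_of_isVee hp (isVee_of_height_pred_eq (by omega) hp hpred), hlast, hpred]

end SpinNode

section NonSpinNode

variable {n i : ℕ} {ε : ℝ} {k : ℤ} {a b : List (ℝ × ℝ)}

theorem mem_pathsB_iff (hin : i ≠ n) {p : List (ℝ × ℝ)} : p ∈ pathsB n ε i k ↔
    ∃ a b, a ∈ pathsBspin n ε (k - (2 * n - 2 * i - 1)) ∧
      b ∈ pathsBspin n ε (k + (2 * n - 2 * i - 1)) ∧ p = a ++ b.reverse ∧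
      height b n < height a n := by
  rw [pathsB, if_neg hin]
  refine ⟨fun ⟨a, b, ha, hb, hp, _, hab⟩ => ⟨a, b, ha, hb, hp, by linarith⟩,
    fun ⟨a, b, ha, hb, hp, hab⟩ => ⟨a, b, ha, hb, hp, ?_, by linarith⟩⟩
  rw [(mem_pathsBspin_iff.mp ha).2.2.1, (mem_pathsBspin_iff.mp hb).2.2.1]

theorem iotaB_eq_legX_left (hin : i ≠ n) :
    iotaB n (i, k) = (legX n (k - (2 * n - 2 * i - 1)) i, k) := by
  unfold iotaB legX
  simp only [hin, if_false]
  split_ifs <;> first | rfl | omega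

theorem eq_pt_last_of_mem_append_reverse {l l' : ℤ} (ha : a ∈ pathsBspin n ε l)
    (hb : b ∈ pathsBspin n ε l') {q : ℝ × ℝ} (hq : q ∈ a ++ b.reverse)
    (hx : q.1 = 2 * n - 1) :
    q = pt a n ∨ q = pt b n :=
  (List.mem_append.mp hq).imp (eq_pt_last_of_mem_pathsBspin ha · hx)
    fun hq => eq_pt_last_of_mem_pathsBspin hb (List.mem_reverse.mp hq) hx

theorem noPeak_of_Cp_eq_empty_nonspin (hk : k % 2 = 0)
    (ha : a ∈ pathsBspin n ε (k - (2 * n - 2 * i - 1)))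
    (hb : b ∈ pathsBspin n ε (k + (2 * n - 2 * i - 1)))
    (hC : Cp (.B n ε) (a ++ b.reverse) false = ∅) :
    NoPeak n (height a) ∧ NoPeak n (height b) := by
  have hla := (mem_pathsBspin_iff.mp ha).1
  have hlb := (mem_pathsBspin_iff.mp hb).1
  have hlen : (a ++ b.reverse).length = 2 * n + 2 := by
    rw [List.length_append, List.length_reverse, hla, hlb]
    ring
  constructor
  · intro t ht htn hpeak
    refine (Cp_nonempty_of_legPeak ha (by omega) ht htn ht (by omega)
      (pt_append_of_lt (by omega)) ?_).ne_empty hC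
    exact (isPeak_append_reverse_left_iff hla htn).mpr hpeak
  · intro t ht htn hpeak
    refine (Cp_nonempty_of_legPeak hb (by omega) ht htn (r := n + 1 + (n - t)) (by omega)
      (by omega) ?_ ?_).ne_empty hC
    · rw [pt_append_reverse_right hla hlb (by omega), Nat.sub_sub_self htn.le]
    · rwa [isPeak_append_reverse_right_iff hla hlb (by omega) (by omega), Nat.sub_sub_self htn.le]

theorem height_eq_of_Cp_eq_empty_nonspin (hn : 2 ≤ n) (hε : 0 < ε) (hk : k % 2 = 0)
    (hin : i < n) (ha : a ∈ pathsBspin n ε (k - (2 * n - 2 * i - 1)))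
    (hb : b ∈ pathsBspin n ε (k + (2 * n - 2 * i - 1))) (hab : height b n < height a n)
    (hC : Cp (.B n ε) (a ++ b.reverse) false = ∅) : height a i = k := by
  obtain ⟨-, -, -, ha₀, hya, halast⟩ := mem_pathsBspin_iff.mp ha
  obtain ⟨-, -, -, -, -, hblast⟩ := mem_pathsBspin_iff.mp hb
  obtain ⟨hnpa, hnpb⟩ := noPeak_of_Cp_eq_empty_nonspin hk ha hb hC
  have hbdown : height b n - height b (n - 1) = -(1 + ε) := by
    refine hblast.resolve_left fun hup => (Cp_nonempty_of_lastStep_up hb (by omega)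
      (fun q hq => List.mem_append_right a (List.mem_reverse.mpr hq)) hup
      fun hq => ?_).ne_empty hC
    rcases eq_pt_last_of_mem_append_reverse ha hb hq rfl with h | h <;>
      have := congrArg Prod.snd h <;> dsimp only at this <;> linarith
  have hb₁ := height_pred_eq_of_noPeak hn hε hb hnpb hbdown
  have haup : height a n - height a (n - 1) = 1 + ε := by
    refine halast.resolve_right fun hdown => ?_
    have ha₁ := height_pred_eq_of_noPeak hn hε ha hnpa hdown
    have : (i : ℝ) + 1 ≤ n := by exact_mod_cast hin
    push_cast at ha₁ hb₁
    linarith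
  have ha₁ : height a (n - 1) = k + 2 * n - 2 * i - 2 := by
    by_cases hq : (2 * (n : ℝ) - 1, height a n - 2 * ε) ∈ a ++ b.reverse
    · rcases eq_pt_last_of_mem_append_reverse ha hb hq rfl with h | h <;>
        have := congrArg Prod.snd h <;> dsimp only at this
      · linarith
      · push_cast at hb₁; linarith
    · exact absurd hC (Cp_nonempty_of_lastStep_up ha (by omega) (List.subset_append_left a _)
        haup hq).ne_empty
  obtain ⟨v, hvn, hv⟩ := hya.exists_isVee two_pos (hnpa.mono (Nat.sub_le n 1))
  have hsub := hv.sub_eq hvn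
  have hv₀ := hv 0 (Nat.zero_le _)
  rw [ha₀, ha₁, Nat.cast_sub (by omega : 1 ≤ n)] at hsub
  rw [ha₀] at hv₀
  obtain rfl : v = i := by
    have : (v : ℝ) = i := by push_cast at hsub; linarith
    exact_mod_cast this
  simp only [CharP.cast_eq_zero, zero_sub, abs_neg, Nat.abs_cast] at hv₀
  push_cast at hv₀
  linarith

theorem heights_of_height_eq_nonspin (hε : 0 < ε) (hε' : ε < 1 / 2) (hin : i < n)
    (ha : a ∈ pathsBspin n ε (k - (2 * n - 2 * i - 1)))
    (hb : b ∈ pathsBspin n ε (k + (2 * n - 2 * i - 1))) (hab : height b n < height a n)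
    (h : height a i = k) :
    height a (n - 1) = k + 2 * n - 2 * i - 2 ∧ height a n - height a (n - 1) = 1 + ε ∧
      height b (n - 1) = k + 2 * n - 2 * i ∧ height b n - height b (n - 1) = -(1 + ε) := by
  obtain ⟨-, -, -, -, hya, halast⟩ := mem_pathsBspin_iff.mp ha
  obtain ⟨-, -, -, hb₀, hyb, hblast⟩ := mem_pathsBspin_iff.mp hb
  have hA := (abs_le.mp (hya.abs_sub_le zero_le_two (show i ≤ n - 1 by omega) le_rfl)).2
  have hB := (abs_le.mp (hyb.abs_sub_le zero_le_two (Nat.zero_le (n - 1)) le_rfl)).1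
  rw [h, Nat.cast_sub (by omega : 1 ≤ n)] at hA
  rw [hb₀, Nat.cast_sub (by omega : 1 ≤ n)] at hB
  push_cast at hA hB
  -- both heights at `N - 1` are integers, and their difference lies in `(-3, -2]`
  obtain ⟨d, hd⟩ := exists_height_eq_of_mem_pathsBspin ha (n - 1) le_rfl
  obtain ⟨d', hd'⟩ := exists_height_eq_of_mem_pathsBspin hb (n - 1) le_rfl
  have hdiff : height a (n - 1) - height b (n - 1) =
      ((-(4 * n - 4 * i - 2) - 4 * d + 4 * d' : ℤ) : ℝ) := by
    rw [hd, hd']; push_cast; ring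
  have hle : ((-(4 * n - 4 * i - 2) - 4 * d + 4 * d' : ℤ) : ℝ) ≤ ((-2 : ℤ) : ℝ) := by
    rw [← hdiff]; push_cast; linarith
  have hgt : ((-3 : ℤ) : ℝ) < ((-(4 * n - 4 * i - 2) - 4 * d + 4 * d' : ℤ) : ℝ) := by
    rw [← hdiff]; push_cast
    rcases halast with h₁ | h₁ <;> rcases hblast with h₂ | h₂ <;> linarith
  have hD : (-(4 * n - 4 * i - 2) - 4 * d + 4 * d' : ℤ) = -2 := by
    have := Int.cast_le.mp hle
    have := Int.cast_lt.mp hgt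
    omega
  rw [hD] at hdiff
  push_cast at hdiff
  have ha₁ : height a (n - 1) = k + 2 * n - 2 * i - 2 := by linarith
  have hb₁ : height b (n - 1) = k + 2 * n - 2 * i := by linarith
  refine ⟨ha₁, ?_, hb₁, ?_⟩
  · exact halast.resolve_right fun h₁ => by rcases hblast with h₂ | h₂ <;> linarith
  · exact hblast.resolve_left fun h₂ => by rcases halast with h₁ | h₁ <;> linarith

theorem isVee_of_height_eq_nonspin (hin : i < n)
    (ha : a ∈ pathsBspin n ε (k - (2 * n - 2 * i - 1))) (h : height a i = k)
    (ha₁ : height a (n - 1) = k + 2 * n - 2 * i - 2) : IsVee 2 (n - 1) i (height a) := by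
  obtain ⟨-, -, -, ha₀, hya, -⟩ := mem_pathsBspin_iff.mp ha
  refine hya.isVee_of_eq zero_le_two (by omega) (by rw [h, ha₀]; push_cast; ring) ?_
  rw [ha₁, h, Nat.cast_sub (by omega : 1 ≤ n)]
  push_cast
  ring

theorem Cp_eq_empty_of_height_eq_nonspin (hε : 0 < ε) (hε' : ε < 1 / 2) (hin : i < n)
    (ha : a ∈ pathsBspin n ε (k - (2 * n - 2 * i - 1)))
    (hb : b ∈ pathsBspin n ε (k + (2 * n - 2 * i - 1))) (hab : height b n < height a n)
    (h : height a i = k) : Cp (.B n ε) (a ++ b.reverse) false = ∅ := by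
  obtain ⟨hla, -, hxa, -⟩ := mem_pathsBspin_iff.mp ha
  obtain ⟨hlb, -, hxb, -⟩ := mem_pathsBspin_iff.mp hb
  obtain ⟨ha₁, haup, hb₁, hbdown⟩ := heights_of_height_eq_nonspin hε hε' hin ha hb hab h
  have hnpa : NoPeak n (height a) := by
    have := ((isVee_of_height_eq_nonspin hin ha h ha₁).noPeak two_pos).succ_of_le
      (by rw [Nat.sub_add_cancel (by omega : 1 ≤ n)]; linarith)
    rwa [Nat.sub_add_cancel (by omega : 1 ≤ n)] at this
  have hnpb : NoPeak n (height b) :=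
    noPeak_of_height_pred_eq (by omega) hb (by rw [hb₁]; push_cast; ring)
  refine Set.eq_empty_of_forall_notMem fun jl hjl => ?_
  rcases peak_or_spin_of_mem_Cp_B hjl with ⟨r, hr, hrl, hx, hpeak⟩ | ⟨w, hw, hw'⟩
  · simp only [List.length_append, List.length_reverse, hla, hlb] at hrl
    rcases lt_trichotomy r n with hrn | rfl | hrn
    · exact hnpa r hr hrn ((isPeak_append_reverse_left_iff hla hrn).mp hpeak)
    · exact hx (by rw [pt_append_of_lt (by omega), hxa])
    · obtain ⟨s, rfl⟩ : ∃ s, r = n + 1 + s := ⟨r - (n + 1), by omega⟩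
      rcases Nat.eq_zero_or_pos s with rfl | hs
      · exact hx (by rw [pt_append_reverse_right hla hlb (Nat.zero_le n), Nat.sub_zero, hxb])
      · exact hnpb (n - s) (by omega) (by omega)
          ((isPeak_append_reverse_right_iff hla hlb hs (by omega)).mp hpeak)
  · rcases eq_pt_last_of_mem_append_reverse ha hb hw rfl with h₁ | h₁ <;>
      have h₂ := congrArg Prod.snd h₁ <;> dsimp only at h₂
    · refine hw' ?_
      have hw : (w : ℝ) = k + (2 * n - 2 * i - 1) := by linarith
      convert List.mem_append_right a (List.mem_reverse.mpr (pt_mem (p := b) (r := n) (by omega)))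
        using 1
      exact Prod.ext hxb.symm (by dsimp only; linarith)
    · exact intCast_add_ne_intCast_sub hε hε' w (k + (2 * n - 2 * i - 1))
        (by push_cast; linarith)

end NonSpinNode

section NonSpinHighest

variable {n i : ℕ} {ε : ℝ} {k : ℤ} {a b : List (ℝ × ℝ)}

theorem height_eq_of_mem_nonspin (hk : k % 2 = 0) (hin : i < n)
    (ha : a ∈ pathsBspin n ε (k - (2 * n - 2 * i - 1)))
    (hb : b ∈ pathsBspin n ε (k + (2 * n - 2 * i - 1)))
    (h : ((legX n (k - (2 * n - 2 * i - 1)) i : ℝ), (k : ℝ)) ∈ a ++ b.reverse) :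
    height a i = k := by
  obtain ⟨-, -, hxa, -⟩ := mem_pathsBspin_iff.mp ha
  obtain ⟨-, -, hxb, -⟩ := mem_pathsBspin_iff.mp hb
  rcases List.mem_append.mp h with h | h
  · rcases eq_pt_of_mem_pathsBspin ha h with h' | ⟨r, -, h', hx⟩
    · exact absurd (congrArg Prod.fst h' ▸ hxa) (legX_ne_two_mul_sub_one i)
    · obtain rfl := legX_injective (Int.cast_injective hx)
      rw [height, ← h']
  · rcases eq_pt_of_mem_pathsBspin hb (List.mem_reverse.mp h) with h' | ⟨r, hr, -, hx⟩
    · exact absurd (congrArg Prod.fst h' ▸ hxb) (legX_ne_two_mul_sub_one i)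
    · exact absurd (Int.cast_injective hx) (legX_ne_legX (by omega) (by omega) hin hr)

noncomputable def highB (n i : ℕ) (ε : ℝ) (k : ℤ) : List (ℝ × ℝ) :=
  veeLeg n (k - (2 * n - 2 * i - 1)) k i (((k + (2 * n - 2 * i - 1) : ℤ) : ℝ) + ε) ++
    (veeLeg n (k + (2 * n - 2 * i - 1)) (((k + (2 * n - 2 * i - 1) : ℤ) : ℝ) + 1) (n - 1)
      (((k + (2 * n - 2 * i - 1) : ℤ) : ℝ) - ε)).reverse

theorem legX_mem_of_height_eq {l : ℤ} (hin : i < n) (ha : a ∈ pathsBspin n ε l)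
    (h : height a i = k) : ((legX n l i : ℝ), (k : ℝ)) ∈ a ++ b.reverse := by
  obtain ⟨hlen, hx, -⟩ := mem_pathsBspin_iff.mp ha
  refine List.mem_append_left _ ?_
  convert pt_mem (p := a) (r := i) (by omega) using 1
  exact Prod.ext (hx i hin).symm h.symm

theorem veeLeg_left_mem (hin : i < n) :
    veeLeg n (k - (2 * n - 2 * i - 1)) k i (((k + (2 * n - 2 * i - 1) : ℤ) : ℝ) + ε) ∈
      pathsBspin n ε (k - (2 * n - 2 * i - 1)) :=
  veeLeg_mem_pathsBspin (by omega) (by omega) (by push_cast; ring) (Or.inl (by push_cast; ring))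

theorem highB_mem_pathsB (hε : 0 < ε) (hin : i < n) : highB n i ε k ∈ pathsB n ε i k := by
  refine (mem_pathsB_iff hin.ne).mpr ⟨_, _, veeLeg_left_mem hin,
    veeLeg_mem_pathsBspin (by omega) le_rfl (by rw [Nat.cast_sub (by omega)]; push_cast; ring)
      (Or.inr (by rw [Nat.cast_sub (by omega)]; push_cast; ring)), rfl, ?_⟩
  rw [height, height, pt_veeLeg (by omega), if_pos rfl, pt_veeLeg (by omega), if_pos rfl]
  dsimp only
  linarith

theorem pathsB_highest_nonspin (hn : 2 ≤ n) (hε : 0 < ε) (hε' : ε < 1 / 2) (hk : k % 2 = 0)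
    (hin : i < n) :
    (∃! p, p ∈ pathsB n ε i k ∧ Cp (.B n ε) p false = ∅) ∧
      ∀ p ∈ pathsB n ε i k, (Cp (.B n ε) p false = ∅ ↔
        ((legX n (k - (2 * n - 2 * i - 1)) i : ℝ), (k : ℝ)) ∈ p) := by
  refine existsUnique_and_iff_of_eq (highB_mem_pathsB hε hin)
    (legX_mem_of_height_eq hin (veeLeg_left_mem hin) ?_) ?_ ?_ ?_
  · rw [height, pt_veeLeg (by omega), if_neg hin.ne]
    simp
  · intro p hp hC
    obtain ⟨a, b, ha, hb, rfl, hab⟩ := (mem_pathsB_iff hin.ne).mp hp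
    exact legX_mem_of_height_eq hin ha
      (height_eq_of_Cp_eq_empty_nonspin hn hε hk hin ha hb hab hC)
  · intro p hp h
    obtain ⟨a, b, ha, hb, rfl, hab⟩ := (mem_pathsB_iff hin.ne).mp hp
    exact Cp_eq_empty_of_height_eq_nonspin hε hε' hin ha hb hab
      (height_eq_of_mem_nonspin hk hin ha hb h)
  · intro p hp h
    obtain ⟨a, b, ha, hb, rfl, hab⟩ := (mem_pathsB_iff hin.ne).mp hp
    have hi := height_eq_of_mem_nonspin hk hin ha hb h
    obtain ⟨ha₁, haup, hb₁, hbdown⟩ :=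
      heights_of_height_eq_nonspin hε hε' hin ha hb hab hi
    have haN : height a n = ((k + (2 * n - 2 * i - 1) : ℤ) : ℝ) + ε := by push_cast; linarith
    have hb₁' : height b (n - 1) = ((k + (2 * n - 2 * i - 1) : ℤ) : ℝ) + 1 := by
      push_cast; linarith
    have hbN : height b n = ((k + (2 * n - 2 * i - 1) : ℤ) : ℝ) - ε := by push_cast; linarith
    rw [eq_veeLeg_of_isVee ha (isVee_of_height_eq_nonspin hin ha hi ha₁),
      eq_veeLeg_of_isVee hb (isVee_of_height_pred_eq (by omega) hb hb₁'), hi, haN, hb₁', hbN,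
      highB]

end NonSpinHighest

/-- For each `(i,k) ∈ X` there exists exactly one path in `𝒫_{i,k}` with no
lower corners (the highest path `p⁺_{i,k}`); moreover a path of `𝒫_{i,k}` has no lower
corners iff it contains the distinguished point (`(i,k)` in type A; `ι(i,k)` in type B when
`i < N`; `(2N-1, k-ε)` in type B when `i = N`) — hence `p⁺_{i,k}` is also the unique path
containing that point. -/
theorem stmt0 (S : Setting) (hS : S.valid) (i : ℕ) (k : ℤ) (hik : (i, k) ∈ X S) :
    (∃! p, p ∈ P S i k ∧ Cp S p false = ∅) ∧
    (∀ p ∈ P S i k, (Cp S p false = ∅ ↔ highPoint S i k ∈ p)) := by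
  cases S with
  | A n =>
    obtain ⟨-, hin, -⟩ := hik
    exact pathsA_highest hin
  | B n ε =>
    obtain ⟨hn, hε, hε'⟩ := hS
    rcases hik with ⟨rfl, hk⟩ | ⟨-, hin, hk⟩
    · have hP : P (.B i ε) i k = pathsBspin i ε k := by simp [P, pathsB]
      have hH : highPoint (.B i ε) i k = (2 * (i : ℝ) - 1, (k : ℝ) - ε) := by simp [highPoint]
      rw [hP, hH]
      exact pathsBspin_highest hn hε hε' hk
    · have hH : highPoint (.B n ε) i k =
          ((legX n (k - (2 * n - 2 * i - 1)) i : ℝ), (k : ℝ)) := by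
        simp [highPoint, hin.ne, iotaB_eq_legX_left hin.ne]
      rw [hH]
      exact pathsB_highest_nonspin hn hε hε' hk hin

end Paper
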